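/- arXiv:1903.01208 — 2 statements merged into one kernel-verified Lean document; each statement's English description precedes it below -/
import Mathlib

section
/- Let A ∈ ℝ^{m×n} be a union of N ≥ 2 orthonormal bases: A = [A₁,…,A_N] where the columns within each block A_i are pairwise orthogonal unit vectors. Suppose μ > 0 satisfies |⟨a_j, a_k⟩| ≤ μ for all columns a_j ≠ a_k of A. If x ∈ ℝⁿ satisfies Ax = b and ‖x‖₀ < N/(2(N − 1)μ), then x is the unique sparsest solution: every y with Ay = b and ‖y‖₀ ≤ ‖x‖₀ satisfies y = x. -/
/-- The number of nonzero entries of a vector (`‖x‖₀`). -/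
noncomputable def l0 {n : ℕ} (x : Fin n → ℝ) : ℕ :=
  (Finset.univ.filter fun j => x j ≠ 0).card

/-!
Put `z = y - x`, a nonzero vector in the kernel of `A`. Reading `Aᵀ A z = 0` at a coordinate `j`
and using that the Gram matrix is the identity on the block of `j`, one gets
`|z j| ≤ μ (‖z‖₁ - s_{π j})`, where `s_b` is the `ℓ¹`-mass of `z` on block `b`. Summing over a block,
`s_b ≤ μ c_b (‖z‖₁ - s_b)` with `c_b` the number of nonzero entries of `z` in block `b`, and Titu's
inequality applied to the weights `‖z‖₁ - s_b` (which add up to `(N - 1) ‖z‖₁`) turns these `N`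
inequalities into `N ≤ (N - 1) μ ‖z‖₀`. Since `‖z‖₀ ≤ 2 ‖x‖₀`, this contradicts the sparsity of `x`.
-/

open Finset Matrix

theorem card_le_card_sub_one_mul_sum_of_le_mul_sum_sub {ι : Type*} [Fintype ι] {s t : ι → ℝ}
    (hs : ∀ i, 0 ≤ s i) (hS : 0 < ∑ i, s i) (hst : ∀ i, s i ≤ t i * (∑ j, s j - s i)) :
    (Fintype.card ι : ℝ) ≤ (Fintype.card ι - 1) * ∑ i, t i := by
  set S := ∑ i, s i
  set N : ℝ := (Fintype.card ι : ℝ)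
  have hu : ∀ i, 0 < S - s i := by
    intro i
    have hsi : s i ≤ S := single_le_sum (fun j _ => hs j) (mem_univ i)
    by_contra h
    have h0 : S - s i = 0 := by linarith
    have := hst i
    rw [h0, mul_zero] at this
    linarith
  have hsum_u : ∑ i, (S - s i) = (N - 1) * S := by
    rw [sum_sub_distrib, sum_const, card_univ, nsmul_eq_mul]; ring
  have hN : 0 < N - 1 := by
    have : 0 < ∑ i, (S - s i) := sum_pos (fun i _ => hu i) (nonempty_of_sum_ne_zero hS.ne')
    rw [hsum_u] at this
    exact pos_of_mul_pos_left this hS.le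
  have htitu : N ^ 2 ≤ (N - 1) * S * ∑ i, 1 / (S - s i) := by
    have := sq_sum_div_le_sum_sq_div univ (fun _ => (1 : ℝ)) (fun i _ => hu i)
    simp only [sum_const, card_univ, nsmul_eq_mul, mul_one, one_pow, hsum_u] at this
    rwa [div_le_iff₀ (by positivity), mul_comm] at this
  have hratio : ∀ i, S * (1 / (S - s i)) - 1 ≤ t i := by
    intro i
    have : S * (1 / (S - s i)) - 1 = s i / (S - s i) := by field_simp [(hu i).ne']; ring
    rw [this, div_le_iff₀ (hu i)]
    exact hst i
  have hsum_t : S * ∑ i, 1 / (S - s i) - N ≤ ∑ i, t i := by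
    have := sum_le_sum fun i (_ : i ∈ univ) => hratio i
    simpa [sum_sub_distrib, mul_sum] using this
  calc N = N ^ 2 - (N - 1) * N := by ring
    _ ≤ (N - 1) * (S * ∑ i, 1 / (S - s i) - N) := by linarith
    _ ≤ (N - 1) * ∑ i, t i := by gcongr

theorem sum_abs_le_card_ne_zero_mul {κ : Type*} {s : Finset κ} {z : κ → ℝ} {M : ℝ}
    (h : ∀ k ∈ s, |z k| ≤ M) : ∑ k ∈ s, |z k| ≤ #{k ∈ s | z k ≠ 0} * M := by
  rw [← sum_filter_of_ne fun k _ hk => abs_ne_zero.1 hk, ← nsmul_eq_mul]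
  exact sum_le_card_nsmul _ _ _ fun k hk => h k (mem_filter.1 hk).1

section Coherence

variable {ι κ β : Type*} [Fintype ι] [Fintype κ] [DecidableEq β] (A : Matrix ι κ ℝ) (π : κ → β)

theorem sum_gram_mul_eq_zero_of_mulVec_eq_zero {z : κ → ℝ} (hz : A *ᵥ z = 0) (j : κ) :
    ∑ k, (∑ i, A i j * A i k) * z k = 0 := by
  have h : (Aᵀ * A) *ᵥ z = 0 := by rw [← mulVec_mulVec, hz, mulVec_zero]
  simpa [mulVec, dotProduct, mul_apply] using congrFun h j

theorem abs_le_mul_sum_abs_offBlock_of_mulVec_eq_zero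
    (hunit : ∀ j, ∑ i, A i j * A i j = 1)
    (horth : ∀ j k, j ≠ k → π j = π k → ∑ i, A i j * A i k = 0)
    {μ : ℝ} (hcoh : ∀ j k, j ≠ k → |∑ i, A i j * A i k| ≤ μ)
    {z : κ → ℝ} (hz : A *ᵥ z = 0) (j : κ) :
    |z j| ≤ μ * ∑ k with π k ≠ π j, |z k| := by
  have hblock : ∑ k with π k = π j, (∑ i, A i j * A i k) * z k = z j := by
    rw [sum_eq_single_of_mem j (by simp), hunit, one_mul]
    intro k hk hkj
    rw [horth j k (Ne.symm hkj) (mem_filter.1 hk).2.symm, zero_mul]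
  have hsplit := sum_filter_add_sum_filter_not univ (fun k => π k = π j)
    fun k => (∑ i, A i j * A i k) * z k
  rw [sum_gram_mul_eq_zero_of_mulVec_eq_zero A hz, hblock, add_eq_zero_iff_eq_neg] at hsplit
  rw [hsplit, abs_neg, mul_sum]
  refine (abs_sum_le_sum_abs _ _).trans (sum_le_sum fun k hk => ?_)
  rw [abs_mul]
  have hkj : j ≠ k := fun h => (mem_filter.1 hk).2 (h ▸ rfl)
  exact mul_le_mul_of_nonneg_right (hcoh j k hkj) (abs_nonneg _)

theorem card_le_card_sub_one_mul_card_support_of_mulVec_eq_zero [Fintype β]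
    (hunit : ∀ j, ∑ i, A i j * A i j = 1)
    (horth : ∀ j k, j ≠ k → π j = π k → ∑ i, A i j * A i k = 0)
    {μ : ℝ} (hcoh : ∀ j k, j ≠ k → |∑ i, A i j * A i k| ≤ μ)
    {z : κ → ℝ} (hz : A *ᵥ z = 0) (hz0 : z ≠ 0) :
    (Fintype.card β : ℝ) ≤ (Fintype.card β - 1) * (μ * #{k | z k ≠ 0}) := by
  set mass : β → ℝ := fun b => ∑ k with π k = b, |z k|
  have htotal : ∑ b, mass b = ∑ k, |z k| := sum_fiberwise univ π _
  have hoff : ∀ k, ∑ l with π l ≠ π k, |z l| = ∑ b, mass b - mass (π k) := fun k => by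
    rw [htotal, ← sum_filter_add_sum_filter_not univ (fun l => π l = π k)]
    ring
  have hmass : ∀ b,
      mass b ≤ μ * #{k ∈ ({k | z k ≠ 0} : Finset κ) | π k = b} * (∑ b', mass b' - mass b) := by
    intro b
    have := sum_abs_le_card_ne_zero_mul (s := {k | π k = b}) (z := z)
      (M := μ * (∑ b', mass b' - mass b)) fun k hk => by
        rw [← (mem_filter.1 hk).2, ← hoff]
        exact abs_le_mul_sum_abs_offBlock_of_mulVec_eq_zero A π hunit horth hcoh hz k
    rwa [filter_comm, ← mul_assoc, mul_comm _ μ] at this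
  have hpos : 0 < ∑ b, mass b := by
    obtain ⟨k, hk⟩ := Function.ne_iff.1 hz0
    rw [htotal]
    exact sum_pos' (fun k _ => abs_nonneg _) ⟨k, mem_univ k, abs_pos.2 hk⟩
  have key := card_le_card_sub_one_mul_sum_of_le_mul_sum_sub
    (fun b => sum_nonneg fun k _ => abs_nonneg (z k)) hpos hmass
  rwa [← mul_sum, ← Nat.cast_sum, ← card_eq_sum_card_fiberwise fun k _ => mem_univ (π k)] at key

end Coherence

theorem l0_sub_le {n : ℕ} (x y : Fin n → ℝ) : l0 (x - y) ≤ l0 x + l0 y := by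
  refine (card_le_card fun j hj => ?_).trans (card_union_le _ _)
  simp only [mem_filter, mem_union, mem_univ, true_and, Pi.sub_apply] at hj ⊢
  contrapose! hj
  rw [hj.1, hj.2, sub_zero]

/-- **Uniqueness of sparse recovery in a union of `N` orthonormal bases.**
If `A` has unit-norm columns partitioned into `N ≥ 2` blocks by `π`, any two distinct
columns within the same block are orthogonal, the overall coherence is bounded by
`μ > 0`, and `x` solves `A x = b` with `‖x‖₀ < N / (2 (N - 1) μ)`, then `x` is the
unique sparsest solution. -/
theorem orthobases_uniqueness {m n N : ℕ} (hN : 2 ≤ N)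
    (A : Matrix (Fin m) (Fin n) ℝ) (π : Fin n → Fin N)
    (hunit : ∀ j, ∑ i, A i j * A i j = 1)
    (horth : ∀ j k, j ≠ k → π j = π k → ∑ i, A i j * A i k = 0)
    (μ : ℝ) (hμ : 0 < μ)
    (hcoh : ∀ j k, j ≠ k → |∑ i, A i j * A i k| ≤ μ)
    (x : Fin n → ℝ) (b : Fin m → ℝ) (hx : A.mulVec x = b)
    (hsparse : (l0 x : ℝ) < (N : ℝ) / (2 * ((N : ℝ) - 1) * μ)) :
    ∀ y : Fin n → ℝ, A.mulVec y = b → l0 y ≤ l0 x → y = x := by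
  intro y hy hle
  by_contra hne
  have hker : A *ᵥ (y - x) = 0 := by rw [mulVec_sub, hx, hy, sub_self]
  have hbound := card_le_card_sub_one_mul_card_support_of_mulVec_eq_zero A π hunit horth hcoh
    hker (sub_ne_zero.2 hne)
  rw [Fintype.card_fin] at hbound
  have hsupp : (l0 (y - x) : ℝ) ≤ 2 * l0 x := by
    exact_mod_cast (l0_sub_le y x).trans (by omega)
  have hN1 : (1 : ℝ) ≤ N - 1 := by
    have : (2 : ℝ) ≤ N := by exact_mod_cast hN
    linarith
  rw [lt_div_iff₀ (by positivity)] at hsparse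
  refine lt_irrefl (N : ℝ) ?_
  calc (N : ℝ) ≤ (N - 1) * (μ * l0 (y - x)) := hbound
    _ ≤ (N - 1) * (μ * (2 * l0 x)) := by gcongr
    _ = l0 x * (2 * (N - 1) * μ) := by ring
    _ < N := hsparse
end

section
/- Let A = [A₁,…,A_N] ∈ ℝ^{m×n} be a union of N ≥ 2 orthonormal bases (unit-norm columns, pairwise orthogonal within each block), and suppose μ > 0 satisfies |⟨a_j, a_k⟩| ≤ μ for all distinct columns a_j, a_k. Let S be a support set with s_i = |S ∩ (block i)| ≥ 1 and s₁ ≤ s₂ ≤ ⋯ ≤ s_N. If Σ_{j=2}^{N} μ s_j/(1 + μ s_j) < 1/(2(1 + μ s₁)), then the Gram matrix A_Sᵀ A_S is invertible and ‖(A_Sᵀ A_S)⁻¹ A_Sᵀ a_j‖₁ < 1 for every column index j ∉ S. -/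
/-!
Let `G = A_Sᵀ A_S` and `G x = b`. For `k` in block `i`, orthogonality within the block turns the
`k`-th row into `x k = b k - ∑_{l ∉ block i} G k l x l`, so `|x k| ≤ |b k| + μ (‖x‖₁ - P i)` with
`P i` the `ℓ¹`-mass of `x` on block `i`. If `|b| ≤ β i` on block `i`, summing over its `s i`
indices and solving for `P i` gives `P i ≤ (s i β i + μ s i ‖x‖₁) / (1 + μ s i)`, and summing over
the blocks, `(1 - c) ‖x‖₁ ≤ ∑ s i β i / (1 + μ s i)` with `c = ∑ μ s i / (1 + μ s i)`.
For `b = 0` this makes `G` injective. For `b = A_Sᵀ a_j`, which vanishes on the block `t` of `j`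
and is bounded by `μ` elsewhere, the right-hand side is `c - μ s_t / (1 + μ s_t)`; the hypothesis
says `2 c < 1 + μ s₁ / (1 + μ s₁)`, and `s₁ ≤ s_t` then gives `‖x‖₁ < 1`.
-/

/-- The Gram matrix `A_Sᵀ A_S` of the columns of `A` indexed by the finite set `S`. -/
noncomputable def gram {m n : ℕ} (A : Matrix (Fin m) (Fin n) ℝ) (S : Finset (Fin n)) :
    Matrix ↥S ↥S ℝ :=
  Matrix.of fun j k : ↥S => ∑ i, A i (j : Fin n) * A i (k : Fin n)

open Finset Matrix

structure IsBlockGram {ι κ : Type*} (G : Matrix ι ι ℝ) (p : ι → κ) (μ : ℝ) : Prop where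
  diag : ∀ k, G k k = 1
  eq_zero_of_block_eq : ∀ k l, k ≠ l → p k = p l → G k l = 0
  abs_le : ∀ k l, k ≠ l → |G k l| ≤ μ

noncomputable def blockWeight (μ t : ℝ) : ℝ := μ * t / (1 + μ * t)

namespace IsBlockGram

variable {ι κ : Type*} [Fintype ι] [DecidableEq κ] {G : Matrix ι ι ℝ} {p : ι → κ} {μ : ℝ}
  {x b : ι → ℝ}

theorem abs_le_add_sum_offBlock (hG : IsBlockGram G p μ) (hx : G *ᵥ x = b) (k : ι) :
    |x k| ≤ |b k| + μ * ∑ l with p l ≠ p k, |x l| := by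
  have hrow : b k = x k + ∑ l with p l ≠ p k, G k l * x l := by
    rw [← hx, mulVec, dotProduct,
      ← sum_filter_add_sum_filter_not univ (fun l => p l = p k), sum_eq_single_of_mem k]
    · rw [hG.diag, one_mul]
    · simp
    · intro l hl hlk
      rw [hG.eq_zero_of_block_eq k l (Ne.symm hlk) (mem_filter.1 hl).2.symm, zero_mul]
  calc |x k| = |b k - ∑ l with p l ≠ p k, G k l * x l| := by rw [hrow, add_sub_cancel_right]
    _ ≤ |b k| + ∑ l with p l ≠ p k, |G k l * x l| :=
      (abs_sub _ _).trans (add_le_add_right (abs_sum_le_sum_abs _ _) _)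
    _ ≤ |b k| + μ * ∑ l with p l ≠ p k, |x l| := by
      rw [mul_sum]
      gcongr with l hl
      rw [abs_mul]
      refine mul_le_mul_of_nonneg_right (hG.abs_le k l fun h => ?_) (abs_nonneg _)
      exact (mem_filter.1 hl).2 (h ▸ rfl)

theorem sum_block_abs_mul_le (hG : IsBlockGram G p μ) (hx : G *ᵥ x = b) {β : κ → ℝ}
    (hb : ∀ k, |b k| ≤ β (p k)) (i : κ) :
    (∑ k with p k = i, |x k|) * (1 + μ * #{k | p k = i}) ≤
      #{k | p k = i} * β i + μ * #{k | p k = i} * ∑ k, |x k| := by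
  have hoff : ∑ l with p l ≠ i, |x l| = ∑ l, |x l| - ∑ l with p l = i, |x l| :=
    eq_sub_of_add_eq' (sum_filter_add_sum_filter_not univ (fun l => p l = i) _)
  have hblock : ∑ k with p k = i, |x k| ≤
      #{k | p k = i} * (β i + μ * ∑ l with p l ≠ i, |x l|) := by
    rw [← nsmul_eq_mul]
    refine sum_le_card_nsmul _ _ _ fun k hk => ?_
    rw [← (mem_filter.1 hk).2]
    exact (hG.abs_le_add_sum_offBlock hx k).trans (add_le_add (hb k) le_rfl)
  rw [hoff] at hblock
  linarith

theorem sum_abs_le [Fintype κ] (hG : IsBlockGram G p μ) (hμ : 0 ≤ μ) (hx : G *ᵥ x = b)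
    {β : κ → ℝ} (hb : ∀ k, |b k| ≤ β (p k)) :
    ∑ k, |x k| ≤ ∑ i, #{k | p k = i} * β i / (1 + μ * #{k | p k = i}) +
      (∑ i, blockWeight μ #{k | p k = i}) * ∑ k, |x k| := by
  rw [sum_mul, ← sum_add_distrib]
  conv_lhs => rw [← sum_fiberwise univ p]
  gcongr with i
  have hpos : 0 < 1 + μ * #{k | p k = i} := by positivity
  rw [blockWeight, div_mul_eq_mul_div, ← add_div, le_div_iff₀ hpos]
  exact hG.sum_block_abs_mul_le hx hb i

theorem isUnit [DecidableEq ι] [Fintype κ] (hG : IsBlockGram G p μ) (hμ : 0 ≤ μ)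
    (hc : ∑ i, blockWeight μ #{k | p k = i} < 1) : IsUnit G := by
  rw [isUnit_iff_isUnit_det, isUnit_iff_ne_zero, Ne, ← exists_mulVec_eq_zero_iff]
  rintro ⟨v, hv, hGv⟩
  have hle := hG.sum_abs_le (β := 0) hμ hGv (by simp)
  simp only [Pi.zero_apply, mul_zero, zero_div, sum_const_zero, zero_add] at hle
  have hnonneg : 0 ≤ ∑ k, |v k| := sum_nonneg fun k _ => abs_nonneg (v k)
  have hzero : ∑ k, |v k| ≤ 0 := by nlinarith
  exact hv (funext fun k => abs_nonpos_iff.1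
    ((single_le_sum (fun l _ => abs_nonneg (v l)) (mem_univ k)).trans hzero))

end IsBlockGram

theorem blockWeight_lt_one {μ t : ℝ} (hμ : 0 ≤ μ) (ht : 0 ≤ t) : blockWeight μ t < 1 := by
  rw [blockWeight, div_lt_one (by positivity)]
  linarith

theorem blockWeight_le_blockWeight {μ t t' : ℝ} (hμ : 0 ≤ μ) (ht : 0 ≤ t) (htt' : t ≤ t') :
    blockWeight μ t ≤ blockWeight μ t' := by
  rw [blockWeight, blockWeight, div_le_div_iff₀ (by positivity) (by nlinarith)]
  nlinarith [mul_le_mul_of_nonneg_left htt' hμ]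

theorem one_div_two_mul_one_add_mul (μ t : ℝ) (h : 0 < 1 + μ * t) :
    1 / (2 * (1 + μ * t)) = (1 - blockWeight μ t) / 2 := by
  rw [blockWeight]
  field_simp
  ring

theorem isBlockGram_gram {m n N : ℕ} {A : Matrix (Fin m) (Fin n) ℝ} {π : Fin n → Fin N} {μ : ℝ}
    (hunit : ∀ j, ∑ i, A i j * A i j = 1)
    (horth : ∀ j k, j ≠ k → π j = π k → ∑ i, A i j * A i k = 0)
    (hcoh : ∀ j k, j ≠ k → |∑ i, A i j * A i k| ≤ μ) (S : Finset (Fin n)) :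
    IsBlockGram (gram A S) (fun k => π k) μ where
  diag k := hunit k
  eq_zero_of_block_eq k l hkl := horth k l (Subtype.coe_ne_coe.2 hkl)
  abs_le k l hkl := hcoh k l (Subtype.coe_ne_coe.2 hkl)

theorem card_filter_univ_subtype {α β : Type*} [DecidableEq β] (S : Finset α) (f : α → β) (i : β) :
    #{k : S | f k = i} = #{j ∈ S | f j = i} :=
  card_bij (fun k _ => k.1) (by simp) (fun _ _ _ _ => Subtype.ext) (fun _ _ => by simp_all)

theorem abs_sum_mul_le_ite {m n N : ℕ} {A : Matrix (Fin m) (Fin n) ℝ} {π : Fin n → Fin N} {μ : ℝ}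
    (horth : ∀ j k, j ≠ k → π j = π k → ∑ i, A i j * A i k = 0)
    (hcoh : ∀ j k, j ≠ k → |∑ i, A i j * A i k| ≤ μ) {k j : Fin n} (hkj : k ≠ j) :
    |∑ i, A i k * A i j| ≤ if π k = π j then 0 else μ := by
  split_ifs with h
  · rw [horth k j hkj h, abs_zero]
  · exact hcoh k j hkj

theorem sum_mul_ite_div_eq {κ : Type*} [Fintype κ] [DecidableEq κ] (μ : ℝ) (s : κ → ℝ) (t : κ) :
    ∑ i, s i * (if i = t then 0 else μ) / (1 + μ * s i) =
      ∑ i, blockWeight μ (s i) - blockWeight μ (s t) := by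
  have hterm : ∀ i, s i * (if i = t then 0 else μ) / (1 + μ * s i) =
      blockWeight μ (s i) - if i = t then blockWeight μ (s i) else 0 := by
    intro i
    split_ifs <;> simp [blockWeight, mul_comm]
  simp only [hterm, sum_sub_distrib, sum_ite_eq', mem_univ, if_true]

/-- **Exact Recovery Condition for a union of `N` orthonormal bases (Tropp).**
Suppose `A = [A₁,…,A_N]` with `N ≥ 2` has unit-norm columns partitioned into blocks by
`π`, distinct columns within a block are orthogonal, and the overall coherence is bounded
by `μ > 0`.  Let `S` meet block `i` in `s i ≥ 1` columns with `s` nondecreasing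
(`s₁ ≤ s₂ ≤ ⋯ ≤ s_N`).  If `∑_{j=2}^{N} μ s_j/(1 + μ s_j) < 1/(2 (1 + μ s₁))`, then the
Gram matrix `A_Sᵀ A_S` is invertible and the Exact Recovery Condition
`‖(A_Sᵀ A_S)⁻¹ A_Sᵀ a_j‖₁ < 1` holds for every column index `j ∉ S`. -/
theorem orthobases_erc {m n N : ℕ} (hN : 2 ≤ N)
    (A : Matrix (Fin m) (Fin n) ℝ) (π : Fin n → Fin N)
    (hunit : ∀ j, ∑ i, A i j * A i j = 1)
    (horth : ∀ j k, j ≠ k → π j = π k → ∑ i, A i j * A i k = 0)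
    (μ : ℝ) (hμ : 0 < μ)
    (hcoh : ∀ j k, j ≠ k → |∑ i, A i j * A i k| ≤ μ)
    (S : Finset (Fin n))
    (s : Fin N → ℕ) (hs : ∀ i, s i = (S.filter fun j => π j = i).card)
    (hmono : ∀ i j : Fin N, i ≤ j → s i ≤ s j)
    (hcond : ∑ i ∈ Finset.univ.filter (fun i => i ≠ (⟨0, by omega⟩ : Fin N)),
        μ * (s i : ℝ) / (1 + μ * (s i : ℝ)) <
      1 / (2 * (1 + μ * (s (⟨0, by omega⟩ : Fin N) : ℝ)))) :
    IsUnit (gram A S) ∧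
      ∀ j ∉ S, ∑ k : ↥S,
        |Matrix.mulVec (gram A S)⁻¹ (fun l : ↥S => ∑ i, A i (l : Fin n) * A i j) k| < 1 := by
  set i₀ : Fin N := ⟨0, by omega⟩
  have hG := isBlockGram_gram hunit horth hcoh S
  have hcard (i : Fin N) : #{k : S | π k = i} = s i :=
    (card_filter_univ_subtype S π i).trans (hs i).symm
  set c := ∑ i, blockWeight μ (s i)
  have hc : 2 * c < 1 + blockWeight μ (s i₀) := by
    rw [one_div_two_mul_one_add_mul _ _ (by positivity), filter_ne', sum_erase_eq_sub (mem_univ _)]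
      at hcond
    change c - blockWeight μ (s i₀) < _ at hcond
    linarith
  have hc1 : c < 1 := by linarith [blockWeight_lt_one hμ.le (s i₀).cast_nonneg]
  have hGunit : IsUnit (gram A S) := hG.isUnit hμ.le (by simpa only [hcard])
  refine ⟨hGunit, fun j hj => ?_⟩
  set b : S → ℝ := fun l => ∑ i, A i l * A i j
  have hx : gram A S *ᵥ ((gram A S)⁻¹ *ᵥ b) = b := by
    rw [mulVec_mulVec, mul_nonsing_inv _ ((isUnit_iff_isUnit_det _).1 hGunit), one_mulVec]
  have hle := hG.sum_abs_le hμ.le hx (β := fun i => if i = π j then 0 else μ)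
    fun k => abs_sum_mul_le_ite horth hcoh fun h => hj (h ▸ k.2)
  simp only [hcard, sum_mul_ite_div_eq] at hle
  have hmin := blockWeight_le_blockWeight hμ.le (s i₀).cast_nonneg
    (Nat.cast_le.2 (hmono i₀ (π j) (Fin.le_def.2 (Nat.zero_le _))))
  nlinarith
end
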